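/- arXiv:1410.8433 — 2 statements merged into one kernel-verified Lean document; each statement's English description precedes it below -/
import Mathlib

section
/- (Lemma 2). For every kernel g of ℓ dimensions, ∏_{i=0}^{ℓ−1} D_g(i) ≤ ∏_{i=0}^{ℓ−1} d(ℓ, ℓ−i); equivalently, E(g) ≤ (1/ℓ) Σ_{i=0}^{ℓ−1} log_ℓ d(ℓ, ℓ−i). -/
/-!
Fix a set `T` of `k` coordinates. The images under `g` of the `2 ^ k` words vanishing outside `T`
form a code of size `2 ^ k`: two such words first differ at some `i ∈ T`, so their images are at
distance at least `D_g(i)`. Hence `min_{i ∈ T} D_g(i) ≤ d(ℓ, k)`. Peeling off, one at a time, a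
coordinate achieving this bound for the set of remaining coordinates bounds the product.
-/

/-- The `i`-th partial distance of a kernel `g` of `ℓ` dimensions:
`D_g(i) = min { d_H(g(w•0•u), g(w•1•v)) : w ∈ {0,1}^i, u, v ∈ {0,1}^{ℓ−1−i} }`,
phrased via pairs of inputs that agree on coordinates `< i` and differ as `0`/`1`
at coordinate `i`. -/
noncomputable def partialDist {ℓ : ℕ} (g : (Fin ℓ → ZMod 2) → (Fin ℓ → ZMod 2)) (i : ℕ) : ℕ :=
  sInf { d | ∃ x y : Fin ℓ → ZMod 2,
    (∀ j : Fin ℓ, (j : ℕ) < i → x j = y j) ∧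
    (∀ j : Fin ℓ, (j : ℕ) = i → x j = 0 ∧ y j = 1) ∧
    d = hammingDist (g x) (g y) }

/-- `d(n,k)`: the largest `d` such that there is a binary code of length `n` and size `2^k`
all of whose pairs of distinct codewords are at Hamming distance at least `d`. -/
noncomputable def maxMinDist (n k : ℕ) : ℕ :=
  sSup { d | ∃ C : Finset (Fin n → ZMod 2), C.card = 2 ^ k ∧
    ∀ c0 ∈ C, ∀ c1 ∈ C, c0 ≠ c1 → d ≤ hammingDist c0 c1 }

open Finset

lemma partialDist_le_hammingDist {ℓ : ℕ} (g : (Fin ℓ → ZMod 2) → (Fin ℓ → ZMod 2))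
    {x y : Fin ℓ → ZMod 2} {i : Fin ℓ} (heq : ∀ j < i, x j = y j) (hne : x i ≠ y i) :
    partialDist g i ≤ hammingDist (g x) (g y) := by
  obtain ⟨hx, hy⟩ | ⟨hx, hy⟩ : (x i = 0 ∧ y i = 1) ∨ (x i = 1 ∧ y i = 0) := by
    revert hne; generalize x i = a; generalize y i = b; revert a b; decide
  · refine Nat.sInf_le ⟨x, y, fun j hj => heq j hj, fun j hj => ?_, rfl⟩
    rw [Fin.ext hj]
    exact ⟨hx, hy⟩
  · rw [hammingDist_comm]
    refine Nat.sInf_le ⟨y, x, fun j hj => (heq j hj).symm, fun j hj => ?_, rfl⟩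
    rw [Fin.ext hj]
    exact ⟨hy, hx⟩

lemma exists_ne_partialDist_le_hammingDist {ℓ : ℕ}
    (g : (Fin ℓ → ZMod 2) → (Fin ℓ → ZMod 2)) {x y : Fin ℓ → ZMod 2} (hxy : x ≠ y) :
    ∃ i, x i ≠ y i ∧ partialDist g i ≤ hammingDist (g x) (g y) := by
  obtain ⟨i, hi, hmin⟩ := wellFounded_lt.has_min {i | x i ≠ y i} (Function.ne_iff.mp hxy)
  exact ⟨i, hi, partialDist_le_hammingDist g (fun j hj => not_not.mp fun h => hmin j h hj) hi⟩

lemma le_maxMinDist {n k d : ℕ} (hk : 0 < k) (C : Finset (Fin n → ZMod 2)) (hC : #C = 2 ^ k)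
    (hd : ∀ c₀ ∈ C, ∀ c₁ ∈ C, c₀ ≠ c₁ → d ≤ hammingDist c₀ c₁) :
    d ≤ maxMinDist n k := by
  refine le_csSup ⟨n, ?_⟩ ⟨C, hC, hd⟩
  rintro d' ⟨C', hC', hd'⟩
  obtain ⟨a, ha, b, hb, hab⟩ := one_lt_card.mp (hC' ▸ Nat.one_lt_two_pow hk.ne')
  calc d' ≤ hammingDist a b := hd' a ha b hb hab
    _ ≤ Fintype.card (Fin n) := hammingDist_le_card_fintype
    _ = n := Fintype.card_fin n

lemma exists_partialDist_le_maxMinDist {ℓ : ℕ} {g : (Fin ℓ → ZMod 2) → (Fin ℓ → ZMod 2)}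
    (hg : g.Injective) (T : Finset (Fin ℓ)) (hT : T.Nonempty) :
    ∃ i ∈ T, partialDist g i ≤ maxMinDist ℓ #T := by
  classical
  let pad : (T → ZMod 2) → Fin ℓ → ZMod 2 := fun u => Function.extend Subtype.val u 0
  have hpad : pad.Injective := fun u v h => funext fun j => by
    simpa [pad, Subtype.val_injective.extend_apply] using congrFun h j
  have hpad_out : ∀ u, ∀ j ∉ T, pad u j = 0 := fun u j hj =>
    Function.extend_apply' _ _ _ (by simpa using hj)
  obtain ⟨i, hiT, hi⟩ := T.exists_mem_eq_inf' hT (fun j => partialDist g j)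
  refine ⟨i, hiT, hi ▸ le_maxMinDist hT.card_pos (univ.image (g ∘ pad)) ?_ ?_⟩
  · rw [card_image_of_injective _ (hg.comp hpad)]
    simp
  · simp only [mem_image, mem_univ, true_and, Function.comp_apply]
    rintro _ ⟨u, rfl⟩ _ ⟨v, rfl⟩ hne
    obtain ⟨j, hj, hle⟩ := exists_ne_partialDist_le_hammingDist g fun h => hne (congrArg g h)
    have hjT : j ∈ T := by_contra fun h => hj (by rw [hpad_out u j h, hpad_out v j h])
    exact (inf'_le _ hjT).trans hle

lemma Finset.prod_le_prod_range_of_exists_le {α : Type*} (s : Finset α) (f : α → ℕ)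
    (h : ℕ → ℕ) (H : ∀ T ⊆ s, T.Nonempty → ∃ j ∈ T, f j ≤ h #T) :
    ∏ j ∈ s, f j ≤ ∏ i ∈ range #s, h (#s - i) := by
  classical
  induction s using Finset.strongInduction with
  | H s ih =>
  obtain rfl | hs := s.eq_empty_or_nonempty
  · simp
  obtain ⟨j, hj, hfj⟩ := H s subset_rfl hs
  have hcard : #s = #(s.erase j) + 1 := (card_erase_add_one hj).symm
  calc ∏ i ∈ s, f i = f j * ∏ i ∈ s.erase j, f i := (mul_prod_erase s f hj).symm
    _ ≤ h #s * ∏ i ∈ range #(s.erase j), h (#(s.erase j) - i) := by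
      gcongr
      exact ih _ (erase_ssubset hj) fun T hT => H T (hT.trans (erase_subset j s))
    _ = ∏ i ∈ range #s, h (#s - i) := by
      rw [hcard, prod_range_succ', mul_comm]
      simp

theorem prod_partialDist_le_prod_maxMinDist {ℓ : ℕ}
    (g : (Fin ℓ → ZMod 2) → (Fin ℓ → ZMod 2)) (hg : Function.Bijective g) :
    ∏ i ∈ Finset.range ℓ, partialDist g i ≤ ∏ i ∈ Finset.range ℓ, maxMinDist ℓ (ℓ - i) := by
  have := univ.prod_le_prod_range_of_exists_le (fun i : Fin ℓ => partialDist g i) (maxMinDist ℓ)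
    fun T _ hT => exists_partialDist_le_maxMinDist hg.injective T hT
  simpa [Fin.prod_univ_eq_prod_range (fun i => partialDist g i)] using this
end

section
/- (Corollary 1). Let ℓ = k_0 > k_1 > ⋯ > k_{m−1} ≥ 1 be integers, set k_m = 0, and let d_0, …, d_{m−1} be positive integers. Suppose P_0, P_1, …, P_{m−1} are partitions of {0,1}^ℓ such that P_0 is the trivial partition with the single block {0,1}^ℓ, each P_{j+1} refines P_j (every block of P_{j+1} is contained in a block of P_j), and for each j every block of P_j has cardinality 2^{k_j} with any two distinct elements of a block at Hamming distance at least d_j. Then there exists a kernel g of ℓ dimensions with ∏_{i=0}^{ℓ−1} D_g(i) ≥ ∏_{j=0}^{m−1} d_j^{k_j − k_{j+1}}; equivalently E(g) ≥ (1/ℓ)·Σ_{j=0}^{m−1} (k_j − k_{j+1})·log_ℓ d_j. -/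
open Finset

theorem antitoneOn_nat_Iic_of_succ_le {α : Type*} [Preorder α] {f : ℕ → α} {m : ℕ}
    (hf : ∀ n < m, f (n + 1) ≤ f n) : AntitoneOn f (Set.Iic m) := by
  intro a _ b hb hab
  induction b, hab using Nat.le_induction with
  | base => exact le_rfl
  | succ n _ ih =>
    have hnm : n < m := Nat.lt_of_succ_le hb
    exact (hf n hnm).trans (ih hnm.le)

theorem Finset.exists_injOn_lt_card {β : Type*} (X : Finset β) :
    ∃ f : β → ℕ, Set.InjOn f X ∧ ∀ q ∈ X, f q < #X := by
  classical
  refine ⟨fun q => if h : q ∈ X then X.equivFin ⟨q, h⟩ else 0, fun p hp q hq hpq => ?_,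
    fun q hq => by simp [hq]⟩
  simp only [mem_coe] at hp hq
  simp only [dif_pos hp, dif_pos hq, Fin.val_inj, EmbeddingLike.apply_eq_iff_eq] at hpq
  exact congrArg Subtype.val hpq

theorem Setoid.exists_subclass_index {α : Type*} [Finite α] {s t : Setoid α} (hts : t ≤ s)
    {a b : ℕ} (hs : ∀ c ∈ s.classes, Nat.card c = a * b)
    (ht : ∀ c ∈ t.classes, Nat.card c = b) :
    ∃ ρ : α → ℕ, (∀ x, ρ x < a) ∧ ∀ x y, s x y → ρ x = ρ y → t x y := by
  classical
  have := Fintype.ofFinite α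
  have card_class : ∀ (r : Setoid α) (x : α), Nat.card {y | r y x} = #{y | r y x} := fun r x => by
    rw [Nat.card_eq_card_toFinset, Set.toFinset_ofPred]
  -- `F x` lists the `t`-classes inside the `s`-class of `x`; there are `a` of them.
  let F : α → Finset (Quotient t) := fun x => ({y | s y x} : Finset α).image (Quotient.mk t)
  have mem_F : ∀ x y, s y x → ⟦y⟧ ∈ F x := fun x y h => mem_image_of_mem _ (by simpa using h)
  have hF_card : ∀ x, #(F x) * b = a * b := by
    intro x
    rw [← hs _ (s.mem_classes x), card_class, card_eq_sum_card_image (Quotient.mk t),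
      sum_const_nat]
    rintro _ hq
    obtain ⟨z, hz, rfl⟩ := mem_image.mp hq
    rw [mem_filter] at hz
    rw [← ht _ (t.mem_classes z), card_class]
    congr 1
    ext y
    simp only [mem_filter, mem_univ, true_and, Quotient.eq]
    exact ⟨And.right, fun h => ⟨s.trans (Setoid.le_def.mp hts h) hz.2, h⟩⟩
  choose idx idx_injOn idx_lt using fun X : Finset (Quotient t) => X.exists_injOn_lt_card
  refine ⟨fun x => idx (F x) ⟦x⟧, fun x => ?_, fun x y hxy hρ => ?_⟩
  · have : Nonempty {y | t y x} := ⟨⟨x, t.refl x⟩⟩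
    have hb : 0 < b := ht _ (t.mem_classes x) ▸ Nat.card_pos
    exact (idx_lt _ _ (mem_F x x (s.refl x))).trans_eq
      (Nat.eq_of_mul_eq_mul_right hb (hF_card x))
  · have hF : F y = F x := by
      simp only [F]
      congr 2
      ext z
      exact ⟨fun h => s.trans h (s.symm hxy), fun h => s.trans h hxy⟩
    simp only [hF] at hρ
    exact Quotient.exact (idx_injOn _ (mem_F x x (s.refl x)) (mem_F x y (s.symm hxy)) hρ)

theorem Setoid.exists_mixedRadix_index {α : Type*} [Finite α] (s : ℕ → Setoid α) (k : ℕ → ℕ)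
    (m : ℕ) (htop : ∀ x y, s 0 x y) (hle : ∀ j < m, s (j + 1) ≤ s j)
    (hk : ∀ j < m, k (j + 1) ≤ k j) (hcard : ∀ j ≤ m, ∀ c ∈ (s j).classes, Nat.card c = 2 ^ k j) :
    ∃ f : α → ℕ, (∀ x, f x < 2 ^ (k 0 - k m)) ∧
      ∀ j ≤ m, ∀ x y, f x / 2 ^ (k j - k m) = f y / 2 ^ (k j - k m) → s j x y := by
  induction m with
  | zero =>
    refine ⟨0, by simp, fun j hj x y _ => ?_⟩
    rw [Nat.le_zero.mp hj]
    exact htop x y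
  | succ m ih =>
    obtain ⟨f, hf_lt, hf⟩ := ih (fun j hj => hle j (by omega)) (fun j hj => hk j (by omega))
      (fun j hj => hcard j (by omega))
    have hkm : k (m + 1) ≤ k m := hk m (by omega)
    set q := 2 ^ (k m - k (m + 1))
    have hq : 0 < q := by positivity
    obtain ⟨ρ, hρ_lt, hρ⟩ := Setoid.exists_subclass_index (hle m (by omega)) (a := q)
      (fun c hc => by rw [hcard m (by omega) c hc, ← pow_add]; congr 1; omega)
      (hcard (m + 1) le_rfl)
    have hdiv : ∀ x, (q * f x + ρ x) / q = f x := fun x => by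
      rw [Nat.mul_add_div hq, Nat.div_eq_of_lt (hρ_lt x), add_zero]
    have hpow : ∀ j ≤ m, 2 ^ (k j - k (m + 1)) = q * 2 ^ (k j - k m) := fun j hj => by
      have hkj : k m ≤ k j := antitoneOn_nat_Iic_of_succ_le hk (by simp; omega) (by simp) hj
      rw [← pow_add]
      congr 1
      omega
    refine ⟨fun x => q * f x + ρ x, fun x => ?_, fun j hj x y hxy => ?_⟩
    · calc q * f x + ρ x < q * (f x + 1) := by
            rw [mul_add_one]; exact Nat.add_lt_add_left (hρ_lt x) _
        _ ≤ q * 2 ^ (k 0 - k m) := Nat.mul_le_mul_left _ (hf_lt x)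
        _ = 2 ^ (k 0 - k (m + 1)) := (hpow 0 (Nat.zero_le _)).symm
    rcases Nat.le_succ_iff.mp hj with hj | rfl
    · rw [hpow j (by omega), ← Nat.div_div_eq_div_mul, ← Nat.div_div_eq_div_mul, hdiv, hdiv] at hxy
      exact hf j (by omega) x y hxy
    · simp only [Nat.sub_self, pow_zero, Nat.div_one] at hxy
      have hfxy : f x = f y := by rw [← hdiv x, hxy, hdiv]
      have hρxy : ρ x = ρ y := by
        simpa [Nat.mul_add_mod, Nat.mod_eq_of_lt (hρ_lt _)] using congrArg (· % q) hxy
      exact hρ x y (hf m le_rfl x y (by rw [hfxy])) hρxy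

theorem exists_injective_index_of_partition_chain {α : Type*} [Finite α] {m : ℕ} (hm : 1 ≤ m)
    (k : ℕ → ℕ) (hk : ∀ j < m, k (j + 1) ≤ k j) (hkm : k m = 0) (P : ℕ → Set (Set α))
    (hpart : ∀ j < m, Setoid.IsPartition (P j)) (hP0 : P 0 = {Set.univ})
    (href : ∀ j, j + 1 < m → ∀ b ∈ P (j + 1), ∃ b' ∈ P j, b ⊆ b')
    (hcard : ∀ j < m, ∀ b ∈ P j, Nat.card b = 2 ^ k j) :
    ∃ f : α → ℕ, Function.Injective f ∧ (∀ x, f x < 2 ^ k 0) ∧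
      ∀ j < m, ∀ x y, f x / 2 ^ k j = f y / 2 ^ k j → ∃ b ∈ P j, x ∈ b ∧ y ∈ b := by
  let s : ℕ → Setoid α := fun j => if h : j < m then Setoid.mkClasses (P j) (hpart j h).2 else ⊥
  have hs_classes : ∀ j < m, (s j).classes = P j := fun j hj => by
    simp only [s, dif_pos hj]
    exact Setoid.classes_mkClasses _ (hpart j hj)
  have hs_m : s m = ⊥ := dif_neg (lt_irrefl m)
  have hs_rel : ∀ j < m, ∀ x y, s j x y ↔ ∃ b ∈ P j, x ∈ b ∧ y ∈ b := fun j hj x y => by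
    rw [Setoid.rel_iff_exists_classes, hs_classes j hj]
  obtain ⟨f, hf_lt, hf⟩ := Setoid.exists_mixedRadix_index s k m
    (fun x y => (hs_rel 0 hm x y).mpr ⟨Set.univ, by simp [hP0]⟩)
    (fun j hj => by
      rcases Nat.lt_or_ge (j + 1) m with hj1 | hj1
      · refine Setoid.le_def.mpr fun {x y} hxy => (hs_rel j hj x y).mpr ?_
        obtain ⟨b, hb, hx, hy⟩ := (hs_rel (j + 1) hj1 x y).mp hxy
        obtain ⟨b', hb', hbb'⟩ := href j hj1 b hb
        exact ⟨b', hb', hbb' hx, hbb' hy⟩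
      · rw [show j + 1 = m by omega, hs_m]
        exact bot_le)
    hk
    (fun j hj c hc => by
      rcases Nat.lt_or_ge j m with hjm | hjm
      · exact hcard j hjm c (hs_classes j hjm ▸ hc)
      · obtain rfl : j = m := by omega
        obtain ⟨y, rfl⟩ := hc
        rw [hs_m, Setoid.bot_def, hkm, pow_zero, Set.ofPred_eq_eq_singleton, Nat.card_unique])
  refine ⟨f, fun x y hxy => ?_, fun x => by simpa [hkm] using hf_lt x, fun j hj x y hxy => ?_⟩
  · have := hf m le_rfl x y (by rw [hxy])
    rwa [hs_m, Setoid.bot_def] at this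
  · exact (hs_rel j hj x y).mp (hf j hj.le x y (by simpa [hkm] using hxy))

/-- The `ℓ` binary digits of `n`, most significant first: coordinate `p` is the bit of
weight `2 ^ (ℓ - 1 - p)`. -/
def binaryDigits (ℓ n : ℕ) : Fin ℓ → ZMod 2 :=
  fun p => if n.testBit (ℓ - 1 - p) then 1 else 0

theorem div_two_pow_eq_of_binaryDigits_eq {ℓ n n' q : ℕ} (hn : n < 2 ^ ℓ) (hn' : n' < 2 ^ ℓ)
    (h : ∀ p : Fin ℓ, (p : ℕ) < ℓ - q → binaryDigits ℓ n p = binaryDigits ℓ n' p) :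
    n / 2 ^ q = n' / 2 ^ q := by
  refine Nat.eq_of_testBit_eq fun r => ?_
  rw [Nat.testBit_div_two_pow, Nat.testBit_div_two_pow]
  rcases Nat.lt_or_ge (r + q) ℓ with hr | hr
  · have hp := h ⟨ℓ - 1 - (r + q), by omega⟩ (by simp only; omega)
    simp only [binaryDigits, show ℓ - 1 - (ℓ - 1 - (r + q)) = r + q by omega] at hp
    revert hp
    cases n.testBit (r + q) <;> cases n'.testBit (r + q) <;> decide
  · have hℓ : 2 ^ ℓ ≤ 2 ^ (r + q) := Nat.pow_le_pow_right two_pos hr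
    rw [Nat.testBit_lt_two_pow (hn.trans_le hℓ), Nat.testBit_lt_two_pow (hn'.trans_le hℓ)]

theorem exists_bijective_div_two_pow_eq_of_agree {ℓ : ℕ} {f : (Fin ℓ → ZMod 2) → ℕ}
    (hf : Function.Injective f) (hf_lt : ∀ x, f x < 2 ^ ℓ) :
    ∃ g : (Fin ℓ → ZMod 2) → (Fin ℓ → ZMod 2), Function.Bijective g ∧
      ∀ q x y, (∀ p : Fin ℓ, (p : ℕ) < ℓ - q → x p = y p) → f (g x) / 2 ^ q = f (g y) / 2 ^ q := by
  have hbits_inj : Function.Injective fun c => binaryDigits ℓ (f c) := fun x y hxy => hf <| by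
    simpa using div_two_pow_eq_of_binaryDigits_eq (q := 0) (hf_lt x) (hf_lt y)
      fun p _ => congrFun hxy p
  let e := Equiv.ofBijective _ (Finite.injective_iff_bijective.mp hbits_inj)
  refine ⟨e.symm, e.symm.bijective, fun q x y hxy => ?_⟩
  refine div_two_pow_eq_of_binaryDigits_eq (hf_lt _) (hf_lt _) fun p hp => ?_
  rw [show binaryDigits ℓ (f (e.symm x)) = x from e.apply_symm_apply x,
    show binaryDigits ℓ (f (e.symm y)) = y from e.apply_symm_apply y]
  exact hxy p hp

theorem le_partialDist {ℓ : ℕ} {g : (Fin ℓ → ZMod 2) → (Fin ℓ → ZMod 2)} {i δ : ℕ} (hi : i < ℓ)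
    (h : ∀ x y : Fin ℓ → ZMod 2, x ≠ y → (∀ p : Fin ℓ, (p : ℕ) < i → x p = y p) →
      δ ≤ hammingDist (g x) (g y)) :
    δ ≤ partialDist g i := by
  refine le_csInf ⟨_, 0, Pi.single ⟨i, hi⟩ 1, fun p hp => ?_, fun p hp => ?_, rfl⟩ ?_
  · rw [Pi.single_eq_of_ne (Fin.ne_of_val_ne hp.ne)]; rfl
  · obtain rfl : p = ⟨i, hi⟩ := Fin.ext hp
    simp
  · rintro _ ⟨x, y, hpre, hi', rfl⟩
    refine h x y (fun hxy => ?_) hpre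
    obtain ⟨hx, hy⟩ := hi' ⟨i, hi⟩ rfl
    rw [hxy, hy] at hx
    exact one_ne_zero hx

theorem prod_pow_le_prod_range_of_le_on_Ico {M : Type*} [CommMonoid M] [PartialOrder M]
    [IsOrderedMonoid M] (c f : ℕ → M) (a : ℕ → ℕ) (m : ℕ) (ha0 : a 0 = 0)
    (ha : ∀ j < m, a j ≤ a (j + 1)) (h : ∀ j < m, ∀ i ∈ Ico (a j) (a (j + 1)), c j ≤ f i) :
    ∏ j ∈ range m, c j ^ (a (j + 1) - a j) ≤ ∏ i ∈ range (a m), f i := by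
  induction m with
  | zero => simp [ha0]
  | succ m ih =>
    rw [prod_range_succ, ← prod_range_mul_prod_Ico f (ha m m.lt_succ_self)]
    refine mul_le_mul' (ih (fun j hj => ha j (by omega)) fun j hj => h j (by omega)) ?_
    rw [← Nat.card_Ico]
    exact pow_card_le_prod _ _ _ (h m m.lt_succ_self)

theorem kernel_from_decomposition_general {ℓ m : ℕ} (hm : 1 ≤ m)
    (k : ℕ → ℕ) (d : ℕ → ℕ)
    (hk0 : k 0 = ℓ)
    (hkdec : ∀ j, j + 1 < m → k (j + 1) < k j)
    (hkm : k m = 0)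
    (P : ℕ → Set (Set (Fin ℓ → ZMod 2)))
    (hpart : ∀ j < m, Setoid.IsPartition (P j))
    (hP0 : P 0 = {Set.univ})
    (href : ∀ j, j + 1 < m → ∀ b ∈ P (j + 1), ∃ b' ∈ P j, b ⊆ b')
    (hcard : ∀ j < m, ∀ b ∈ P j, Nat.card b = 2 ^ k j)
    (hdist : ∀ j < m, ∀ b ∈ P j, ∀ c0 ∈ b, ∀ c1 ∈ b,
      c0 ≠ c1 → d j ≤ hammingDist c0 c1) :
    ∃ g : (Fin ℓ → ZMod 2) → (Fin ℓ → ZMod 2), Function.Bijective g ∧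
      ∏ j ∈ Finset.range m, d j ^ (k j - k (j + 1)) ≤
        ∏ i ∈ Finset.range ℓ, partialDist g i := by
  have hk : ∀ j < m, k (j + 1) ≤ k j := fun j hj => by
    rcases Nat.lt_or_ge (j + 1) m with h | h
    · exact (hkdec j h).le
    · rw [show j + 1 = m by omega, hkm]; exact Nat.zero_le _
  have hkℓ : ∀ j ≤ m, k j ≤ ℓ := fun j hj =>
    hk0 ▸ antitoneOn_nat_Iic_of_succ_le hk (by simp) (by simpa using hj) (Nat.zero_le j)
  obtain ⟨f, hf_inj, hf_lt, hf⟩ :=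
    exists_injective_index_of_partition_chain hm k hk hkm P hpart hP0 href hcard
  obtain ⟨g, hg, hg_agree⟩ := exists_bijective_div_two_pow_eq_of_agree hf_inj (hk0 ▸ hf_lt)
  refine ⟨g, hg, ?_⟩
  have hD : ∀ j < m, ∀ i ∈ Ico (ℓ - k j) (ℓ - k (j + 1)), d j ≤ partialDist g i := by
    intro j hj i hi
    rw [mem_Ico] at hi
    refine le_partialDist (by have := hkℓ (j + 1) hj; omega) fun x y hxy hpre => ?_
    obtain ⟨b, hb, hxb, hyb⟩ :=
      hf j hj _ _ (hg_agree (k j) x y fun p hp => hpre p (by omega))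
    exact hdist j hj b hb _ hxb _ hyb (hg.injective.ne hxy)
  calc ∏ j ∈ range m, d j ^ (k j - k (j + 1))
      = ∏ j ∈ range m, d j ^ ((ℓ - k (j + 1)) - (ℓ - k j)) := prod_congr rfl fun j hj => by
        have := hk j (mem_range.mp hj)
        have := hkℓ j (mem_range.mp hj).le
        congr 1
        omega
    _ ≤ ∏ i ∈ range (ℓ - k m), partialDist g i :=
      prod_pow_le_prod_range_of_le_on_Ico d _ (fun j => ℓ - k j) m (by simp [hk0])
        (fun j hj => Nat.sub_le_sub_left (hk j hj) ℓ) hD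
    _ = ∏ i ∈ range ℓ, partialDist g i := by rw [hkm, Nat.sub_zero]

theorem kernel_from_decomposition {ℓ m : ℕ} (hm : 1 ≤ m)
    (k : ℕ → ℕ) (d : ℕ → ℕ)
    (hk0 : k 0 = ℓ)
    (hkdec : ∀ j, j + 1 < m → k (j + 1) < k j)
    (hklast : 1 ≤ k (m - 1)) (hkm : k m = 0)
    (hd : ∀ j < m, 1 ≤ d j)
    (P : ℕ → Set (Set (Fin ℓ → ZMod 2)))
    (hpart : ∀ j < m, Setoid.IsPartition (P j))
    (hP0 : P 0 = {Set.univ})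
    (href : ∀ j, j + 1 < m → ∀ b ∈ P (j + 1), ∃ b' ∈ P j, b ⊆ b')
    (hcard : ∀ j < m, ∀ b ∈ P j, Nat.card b = 2 ^ k j)
    (hdist : ∀ j < m, ∀ b ∈ P j, ∀ c0 ∈ b, ∀ c1 ∈ b,
      c0 ≠ c1 → d j ≤ hammingDist c0 c1) :
    ∃ g : (Fin ℓ → ZMod 2) → (Fin ℓ → ZMod 2), Function.Bijective g ∧
      ∏ j ∈ Finset.range m, d j ^ (k j - k (j + 1)) ≤
        ∏ i ∈ Finset.range ℓ, partialDist g i :=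
  kernel_from_decomposition_general hm k d hk0 hkdec hkm P hpart hP0 href hcard hdist
end
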